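/- Let $\Lambda = KQ/\langle\text{paths of length } L+1\rangle$ be a truncated path algebra, $P$ a finitely generated projective left $\Lambda$-module, $C \subseteq P$ a $\Lambda$-submodule, and $0 \le l \le L$. Then $JC \cap J^{l+1}P = Q_1 \cdot (C \cap J^l P)$, where $Q_1 \cdot U$ denotes the $K$-span of all $\alpha u$ with $\alpha \in Q_1$ and $u \in U$. -/

import Mathlib

universe uV uE

/-- Paths of length at most `L` in a quiver, the canonical `K`-basis of the truncated
path algebra `KQ/⟨paths of length L+1⟩`. -/
abbrev PathLE (V : Type uV) [Quiver.{uE + 1} V] (L : ℕ) :=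
  Σ a b : V, {p : Quiver.Path a b // p.length ≤ L}

/-- The Jacobson radical of a truncated path algebra: the ideal generated by (the classes
of) all paths of positive length. -/
def radJ {V : Type uV} [Quiver.{uE + 1} V] {L : ℕ} {K Λ : Type*} [Field K] [Ring Λ]
    [Algebra K Λ] (bas : Module.Basis (PathLE V L) K Λ) : Ideal Λ :=
  Ideal.span {x | ∃ (a b : V) (p : Quiver.Path a b) (hp : p.length ≤ L),
    0 < p.length ∧ x = bas ⟨a, b, p, hp⟩}

/-- For a subset `U` of a `Λ`-module `P`, the `K`-span `Q₁ · U` of all elements `α • u`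
with `α` an arrow of the quiver and `u ∈ U`. -/
def arrowSpan {V : Type uV} [Quiver.{uE + 1} V] {L : ℕ} {K Λ : Type*} [Field K] [Ring Λ]
    [Algebra K Λ] (bas : Module.Basis (PathLE V L) K Λ) (h1 : 1 ≤ L)
    {P : Type*} [AddCommGroup P] [Module K P] [Module Λ P] (U : Set P) : Submodule K P :=
  Submodule.span K {y | ∃ (a b : V) (α : a ⟶ b) (u : P), u ∈ U ∧
    y = bas ⟨a, b, α.toPath, by simpa [Quiver.Hom.toPath] using h1⟩ • u}


/-!
Λ is graded by path length, and `J ^ m` is the `K`-span of the paths of length at least `m`.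
Left multiplication by an arrow `α` raises degrees by one, and on paths of length `< L` ending
at the source of `α` it has a `K`-linear left inverse (strip a final `α`) that kills the
multiples of every other arrow. Write `x ∈ JC ∩ J^{l+1}P` as `x = ∑ α • c_α` with `c_α ∈ C`;
the part of degree `≤ l` of `x` is `∑ α • (part of degree < l of c_α)` and vanishes, so stripping
`α` shows that `e_α c_α ∈ C ∩ J^l P`, where `e_α` is the vertex idempotent at the source of `α`,
and `x = ∑ α • (e_α c_α)`. For projective `P` this is checked coordinatewise in a free module
of which `P` is a retract.
-/

def PathLE.length {V : Type uV} [Quiver.{uE + 1} V] {L : ℕ} (q : PathLE V L) : ℕ :=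
  q.2.2.1.length

namespace TruncatedPathAlgebra

open Quiver

variable {V : Type uV} [Quiver.{uE + 1} V] {L : ℕ} {K Λ : Type*} [Field K] [Ring Λ]
  [Algebra K Λ] (bas : Module.Basis (PathLE V L) K Λ)

noncomputable def vertex (a : V) : Λ := bas ⟨a, a, .nil, Nat.zero_le L⟩

noncomputable def arrow (h1 : 1 ≤ L) (γ : Total V) : Λ := bas ⟨γ.left, γ.right, γ.hom.toPath, h1⟩

def pathsGE (m : ℕ) : Submodule K Λ := Submodule.span K (bas '' {q | m ≤ q.length})

variable (hmul : ∀ (a b c : V) (p : Path a b) (q : Path b c) (hp : p.length ≤ L)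
    (hq : q.length ≤ L), bas ⟨b, c, q, hq⟩ * bas ⟨a, b, p, hp⟩ =
      if h : p.length + q.length ≤ L then
        bas ⟨a, c, p.comp q, by rwa [Path.length_comp]⟩ else 0)
  (hmul0 : ∀ (a b b' c : V) (p : Path a b) (q : Path b' c) (hp : p.length ≤ L)
    (hq : q.length ≤ L), b ≠ b' → bas ⟨b', c, q, hq⟩ * bas ⟨a, b, p, hp⟩ = 0)

include hmul in
theorem arrow_mul_bas (h1 : 1 ≤ L) {a b c : V} (α : a ⟶ b) (σ : Path c a)
    (hσ : σ.length ≤ L) :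
    arrow bas h1 ⟨a, b, α⟩ * bas ⟨c, a, σ, hσ⟩ =
      if h : (σ.cons α).length ≤ L then bas ⟨c, b, σ.cons α, h⟩ else 0 :=
  hmul c a b σ α.toPath hσ h1

include hmul0 in
theorem arrow_mul_bas_of_ne (h1 : 1 ≤ L) {a b c d : V} (α : a ⟶ b) (σ : Path c d)
    (hσ : σ.length ≤ L) (hd : d ≠ a) : arrow bas h1 ⟨a, b, α⟩ * bas ⟨c, d, σ, hσ⟩ = 0 :=
  hmul0 c d a b σ α.toPath hσ h1 hd

include hmul in
theorem vertex_mul_bas {a c : V} (σ : Path c a) (hσ : σ.length ≤ L) :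
    vertex bas a * bas ⟨c, a, σ, hσ⟩ = bas ⟨c, a, σ, hσ⟩ :=
  (hmul c a a σ .nil hσ (Nat.zero_le L)).trans (dif_pos hσ)

include hmul0 in
theorem vertex_mul_bas_of_ne {a c d : V} (σ : Path c d) (hσ : σ.length ≤ L) (hd : d ≠ a) :
    vertex bas a * bas ⟨c, d, σ, hσ⟩ = 0 :=
  hmul0 c d a a σ .nil hσ (Nat.zero_le L) hd

include hmul in
theorem arrow_mul_vertex (h1 : 1 ≤ L) (γ : Total V) :
    arrow bas h1 γ * vertex bas γ.left = arrow bas h1 γ :=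
  (arrow_mul_bas bas hmul h1 γ.hom .nil _).trans (dif_pos h1)

theorem mem_pathsGE_zero (x : Λ) : x ∈ pathsGE bas 0 := by
  simp [pathsGE, bas.span_eq]

theorem pathsGE_anti {m n : ℕ} (h : m ≤ n) : pathsGE bas n ≤ pathsGE bas m :=
  Submodule.span_mono (Set.image_mono fun _ hq => h.trans hq)

include hmul hmul0 in
theorem bas_mul_bas_mem_pathsGE (p q : PathLE V L) :
    bas q * bas p ∈ pathsGE bas (p.length + q.length) := by
  obtain ⟨a, b, p, hp⟩ := p
  obtain ⟨b', c, q, hq⟩ := q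
  by_cases hb : b = b'
  · subst hb
    rw [hmul]
    split_ifs
    · exact Submodule.subset_span ⟨_, by simp [PathLE.length], rfl⟩
    · exact zero_mem _
  · rw [hmul0 _ _ _ _ _ _ _ _ hb]
    exact zero_mem _

include hmul hmul0 in
theorem mul_mem_pathsGE {m n : ℕ} {x y : Λ} (hx : x ∈ pathsGE bas m) (hy : y ∈ pathsGE bas n) :
    x * y ∈ pathsGE bas (m + n) := by
  have : pathsGE bas m * pathsGE bas n ≤ pathsGE bas (m + n) := by
    rw [pathsGE, pathsGE, Submodule.span_mul_span, Submodule.span_le]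
    rintro _ ⟨_, ⟨q, hq, rfl⟩, _, ⟨p, hp, rfl⟩, rfl⟩
    exact pathsGE_anti bas (by simp only [Set.mem_ofPred_eq] at hp hq; omega)
      (bas_mul_bas_mem_pathsGE bas hmul hmul0 p q)
  exact this (Submodule.mul_mem_mul hx hy)

include hmul hmul0 in
theorem mem_pathsGE_one_of_mem_radJ {x : Λ} (hx : x ∈ radJ bas) : x ∈ pathsGE bas 1 := by
  induction hx using Submodule.span_induction with
  | mem x hx =>
    obtain ⟨a, b, p, hp, hpos, rfl⟩ := hx
    exact Submodule.subset_span ⟨_, hpos, rfl⟩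
  | zero => exact zero_mem _
  | add x y _ _ hx hy => exact add_mem hx hy
  | smul r x _ hx =>
    simpa using mul_mem_pathsGE bas hmul hmul0 (m := 0) (mem_pathsGE_zero bas _) hx

include hmul hmul0 in
theorem mem_pathsGE_of_mem_radJ_pow {m : ℕ} {x : Λ} (hx : x ∈ radJ bas ^ m) :
    x ∈ pathsGE bas m := by
  induction m generalizing x with
  | zero => exact mem_pathsGE_zero bas x
  | succ m ih =>
    rw [Submodule.pow_succ] at hx
    exact Submodule.mul_induction_on hx
      (fun r hr s hs => mul_mem_pathsGE bas hmul hmul0 (ih hr)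
        (mem_pathsGE_one_of_mem_radJ bas hmul hmul0 hs)) fun _ _ => add_mem

include hmul in
theorem bas_mem_radJ_pow (q : PathLE V L) : bas q ∈ radJ bas ^ q.length := by
  suffices ∀ n (a b : V) (p : Path a b) (hp : p.length ≤ L), p.length = n →
      bas ⟨a, b, p, hp⟩ ∈ radJ bas ^ n from this _ _ _ _ _ rfl
  intro n
  induction n with
  | zero =>
    intros
    rw [Submodule.pow_zero, Ideal.one_eq_top]
    trivial
  | succ n ih =>
    intro a b p hp hn
    obtain ⟨c, f, q, hq, rfl⟩ := p.eq_toPath_comp_of_length_eq_succ hn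
    have hf : f.toPath.length ≤ L := by
      simp only [Path.length_comp, Path.length_toPath] at hp ⊢
      omega
    have hprod := hmul a c b f.toPath q hf (by omega)
    rw [dif_pos (by rwa [← Path.length_comp])] at hprod
    rw [← hprod, Submodule.pow_succ]
    exact Ideal.mul_mem_mul (ih _ _ q _ hq) (Ideal.subset_span ⟨a, c, f.toPath, hf, by simp, rfl⟩)

include hmul hmul0 in
theorem mem_radJ_pow_iff {m : ℕ} {x : Λ} : x ∈ radJ bas ^ m ↔ x ∈ pathsGE bas m := by
  refine ⟨mem_pathsGE_of_mem_radJ_pow bas hmul hmul0, fun hx => ?_⟩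
  have : pathsGE bas m ≤ (radJ bas ^ m).restrictScalars K := by
    rw [pathsGE, Submodule.span_le]
    rintro _ ⟨q, hq, rfl⟩
    exact Ideal.pow_le_pow_right hq (bas_mem_radJ_pow bas hmul q)
  exact this hx

theorem arrow_mem_radJ (h1 : 1 ≤ L) (γ : Total V) : arrow bas h1 γ ∈ radJ bas :=
  Ideal.subset_span ⟨γ.left, γ.right, γ.hom.toPath, h1, Nat.one_pos, rfl⟩

noncomputable def lowPart (m : ℕ) : Λ →ₗ[K] Λ :=
  bas.constr K fun q => if q.length < m then bas q else 0

theorem lowPart_bas (m : ℕ) (q : PathLE V L) :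
    lowPart bas m (bas q) = if q.length < m then bas q else 0 :=
  bas.constr_basis K _ q

theorem lowPart_eq_zero_iff {m : ℕ} {x : Λ} : lowPart bas m x = 0 ↔ x ∈ pathsGE bas m := by
  constructor
  · intro hx
    have : LinearMap.range (LinearMap.id - lowPart bas m) ≤ pathsGE bas m := by
      rw [LinearMap.range_eq_map, ← bas.span_eq, Submodule.map_span_le]
      rintro _ ⟨q, rfl⟩
      rw [LinearMap.sub_apply, LinearMap.id_apply, lowPart_bas]
      split_ifs with h
      · rw [sub_self]
        exact zero_mem _
      · rw [sub_zero]
        exact Submodule.subset_span ⟨q, not_lt.1 h, rfl⟩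
    simpa [hx] using this (LinearMap.mem_range_self _ x)
  · intro hx
    have : pathsGE bas m ≤ LinearMap.ker (lowPart bas m) := by
      rw [pathsGE, Submodule.span_le]
      rintro _ ⟨q, hq, rfl⟩
      simp [lowPart_bas, not_lt.2 (show m ≤ q.length from hq)]
    exact this hx

theorem lowPart_lowPart_of_le {m n : ℕ} (h : n ≤ m) (x : Λ) :
    lowPart bas m (lowPart bas n x) = lowPart bas n x := by
  suffices (lowPart bas m).comp (lowPart bas n) = lowPart bas n from LinearMap.congr_fun this x
  refine bas.ext fun q => ?_
  simp only [LinearMap.comp_apply, lowPart_bas]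
  split_ifs <;> simp [lowPart_bas, *]
  omega

include hmul hmul0 in
theorem vertex_mul_lowPart (a : V) (m : ℕ) (y : Λ) :
    vertex bas a * lowPart bas m y = lowPart bas m (vertex bas a * y) := by
  suffices (LinearMap.mulLeft K (vertex bas a)).comp (lowPart bas m) =
      (lowPart bas m).comp (LinearMap.mulLeft K (vertex bas a)) from LinearMap.congr_fun this y
  refine bas.ext fun ⟨c, d, σ, hσ⟩ => ?_
  simp only [LinearMap.comp_apply, LinearMap.mulLeft_apply, lowPart_bas]
  by_cases hd : d = a
  · subst hd
    split_ifs <;> simp [vertex_mul_bas bas hmul, lowPart_bas, *]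
  · split_ifs <;> simp [vertex_mul_bas_of_ne bas hmul0 _ _ hd]

include hmul hmul0 in
theorem lowPart_succ_arrow_mul (h1 : 1 ≤ L) (γ : Total V) (m : ℕ) (y : Λ) :
    lowPart bas (m + 1) (arrow bas h1 γ * y) = arrow bas h1 γ * lowPart bas m y := by
  obtain ⟨a, b, α⟩ := γ
  suffices (lowPart bas (m + 1)).comp (LinearMap.mulLeft K (arrow bas h1 ⟨a, b, α⟩)) =
      (LinearMap.mulLeft K (arrow bas h1 ⟨a, b, α⟩)).comp (lowPart bas m) from
    LinearMap.congr_fun this y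
  refine bas.ext fun ⟨c, d, σ, hσ⟩ => ?_
  simp only [LinearMap.comp_apply, LinearMap.mulLeft_apply, lowPart_bas]
  by_cases hd : d = a
  · subst hd
    by_cases hL : σ.length < L <;> by_cases hm : σ.length < m <;>
      simp [arrow_mul_bas bas hmul, lowPart_bas, PathLE.length, hL, hm]
  · split_ifs <;> simp [arrow_mul_bas_of_ne bas hmul0 h1 _ _ _ hd]

open Classical in
noncomputable def stripLastArrow (β : Total V) : Λ →ₗ[K] Λ :=
  bas.constr K fun
    | ⟨_, _, ⟨.nil, _⟩⟩ => 0
    | ⟨a, b, ⟨.cons (b := c) τ α, h⟩⟩ =>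
      if (⟨c, b, α⟩ : Total V) = β then bas ⟨a, c, τ, Nat.le_of_succ_le h⟩ else 0

open Classical in
theorem stripLastArrow_bas_cons (β : Total V) {a b c : V} (τ : Path a c) (α : c ⟶ b)
    (h : (τ.cons α).length ≤ L) :
    stripLastArrow bas β (bas ⟨a, b, τ.cons α, h⟩) =
      if (⟨c, b, α⟩ : Total V) = β then bas ⟨a, c, τ, Nat.le_of_succ_le h⟩ else 0 := by
  rw [stripLastArrow, bas.constr_basis]

include hmul hmul0 in
theorem stripLastArrow_arrow_mul (h1 : 1 ≤ L) (β : Total V) (y : Λ) :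
    stripLastArrow bas β (arrow bas h1 β * y) = vertex bas β.left * lowPart bas L y := by
  obtain ⟨a, b, α⟩ := β
  suffices (stripLastArrow bas ⟨a, b, α⟩).comp (LinearMap.mulLeft K (arrow bas h1 ⟨a, b, α⟩)) =
      (LinearMap.mulLeft K (vertex bas a)).comp (lowPart bas L) from LinearMap.congr_fun this y
  refine bas.ext fun ⟨c, d, σ, hσ⟩ => ?_
  simp only [LinearMap.comp_apply, LinearMap.mulLeft_apply, lowPart_bas]
  by_cases hd : d = a
  · subst hd
    by_cases hL : σ.length < L <;>
      simp [arrow_mul_bas bas hmul, stripLastArrow_bas_cons, vertex_mul_bas bas hmul,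
        PathLE.length, hL]
  · split_ifs <;>
      simp [arrow_mul_bas_of_ne bas hmul0 h1 _ _ _ hd, vertex_mul_bas_of_ne bas hmul0 _ _ hd]

include hmul hmul0 in
theorem stripLastArrow_arrow_mul_of_ne (h1 : 1 ≤ L) {β γ : Total V} (hγ : γ ≠ β) (y : Λ) :
    stripLastArrow bas β (arrow bas h1 γ * y) = 0 := by
  obtain ⟨a, b, α⟩ := γ
  suffices (stripLastArrow bas β).comp (LinearMap.mulLeft K (arrow bas h1 ⟨a, b, α⟩)) = 0 from
    LinearMap.congr_fun this y
  refine bas.ext fun ⟨c, d, σ, hσ⟩ => ?_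
  simp only [LinearMap.comp_apply, LinearMap.mulLeft_apply, LinearMap.zero_apply]
  by_cases hd : d = a
  · subst hd
    by_cases hL : σ.length < L <;>
      simp [arrow_mul_bas bas hmul, stripLastArrow_bas_cons, hL, hγ]
  · rw [arrow_mul_bas_of_ne bas hmul0 h1 _ _ _ hd, map_zero]

include hmul hmul0 in
theorem vertex_mul_mem_pathsGE_of_sum_arrow_mul_mem (h1 : 1 ≤ L) {l : ℕ} (hl : l ≤ L)
    (A : Finset (Total V)) (y : Total V → Λ)
    (h : ∑ γ ∈ A, arrow bas h1 γ * y γ ∈ pathsGE bas (l + 1)) {β : Total V} (hβ : β ∈ A) :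
    vertex bas β.left * y β ∈ pathsGE bas l := by
  rw [← lowPart_eq_zero_iff] at h ⊢
  simp only [map_sum, lowPart_succ_arrow_mul bas hmul hmul0] at h
  have := congrArg (stripLastArrow bas β) h
  rwa [map_sum, map_zero, Finset.sum_eq_single_of_mem β hβ fun γ _ hγ =>
      stripLastArrow_arrow_mul_of_ne bas hmul hmul0 h1 hγ _,
    stripLastArrow_arrow_mul bas hmul hmul0, lowPart_lowPart_of_le bas hl,
    vertex_mul_lowPart bas hmul hmul0] at this

include hmul hmul0 in
theorem mem_radJ_pow_smul_top_iff {ι : Type*} {m : ℕ} {x : ι →₀ Λ} :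
    x ∈ radJ bas ^ m • (⊤ : Submodule Λ (ι →₀ Λ)) ↔ ∀ j, x j ∈ pathsGE bas m := by
  constructor
  · intro hx j
    refine Submodule.smul_induction_on hx (fun r hr n _ => ?_) fun x y hx hy => ?_
    · simpa using mul_mem_pathsGE bas hmul hmul0 ((mem_radJ_pow_iff bas hmul hmul0).1 hr)
        (n := 0) (mem_pathsGE_zero bas _)
    · simpa using add_mem hx hy
  · intro hx
    rw [← Finsupp.sum_single x]
    refine Submodule.sum_mem _ fun j _ => ?_
    rw [← Finsupp.smul_single_one]
    exact Submodule.smul_mem_smul ((mem_radJ_pow_iff bas hmul hmul0).2 (hx j)) trivial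

include hmul hmul0 in
theorem vertex_smul_mem_of_sum_arrow_smul_mem {M : Type*} [AddCommGroup M] [Module Λ M]
    [Module.Projective Λ M] (h1 : 1 ≤ L) {l : ℕ} (hl : l ≤ L) (A : Finset (Total V))
    (g : Total V → M)
    (h : ∑ γ ∈ A, arrow bas h1 γ • g γ ∈ radJ bas ^ (l + 1) • (⊤ : Submodule Λ M))
    {β : Total V} (hβ : β ∈ A) :
    vertex bas β.left • g β ∈ radJ bas ^ l • (⊤ : Submodule Λ M) := by
  obtain ⟨s, hs⟩ := Module.projective_def'.1 ‹Module.Projective Λ M›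
  have hsh := Submodule.smul_top_le_comap_smul_top _ s h
  rw [Submodule.mem_comap, mem_radJ_pow_smul_top_iff bas hmul hmul0] at hsh
  have hsβ : s (vertex bas β.left • g β) ∈ radJ bas ^ l • (⊤ : Submodule Λ (M →₀ Λ)) := by
    rw [mem_radJ_pow_smul_top_iff bas hmul hmul0]
    intro j
    simp only [map_sum, map_smul, Finsupp.finsetSum_apply, Finsupp.smul_apply, smul_eq_mul]
      at hsh ⊢
    exact vertex_mul_mem_pathsGE_of_sum_arrow_mul_mem bas hmul hmul0 h1 hl A
      (fun γ => s (g γ) j) (hsh j) hβ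
  simpa [← LinearMap.comp_apply, hs] using
    Submodule.smul_top_le_comap_smul_top _ (Finsupp.linearCombination Λ id) hsβ

include hmul hmul0 in
theorem arrow_smul_mem_radJ_pow_succ_smul {M : Type*} [AddCommGroup M] [Module Λ M]
    (h1 : 1 ≤ L) (γ : Total V) {l : ℕ} {N : Submodule Λ M} {u : M}
    (hu : u ∈ radJ bas ^ l • N) : arrow bas h1 γ • u ∈ radJ bas ^ (l + 1) • N := by
  refine Submodule.smul_induction_on hu (fun r hr n hn => ?_) fun x y hx hy => ?_
  · rw [← mul_smul]
    refine Submodule.smul_mem_smul ((mem_radJ_pow_iff bas hmul hmul0).2 ?_) hn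
    rw [add_comm]
    exact mul_mem_pathsGE bas hmul hmul0
      (mem_pathsGE_one_of_mem_radJ bas hmul hmul0 (arrow_mem_radJ bas h1 γ))
      ((mem_radJ_pow_iff bas hmul hmul0).1 hr)
  · rw [smul_add]
    exact add_mem hx hy

variable {M : Type*} [AddCommGroup M] [Module K M] [Module Λ M] [IsScalarTower K Λ M]

include hmul hmul0 in
theorem radJ_smul_le_arrowSpan (h1 : 1 ≤ L) (N : Submodule Λ M) :
    (radJ bas • N).restrictScalars K ≤ arrowSpan bas h1 (N : Set M) := by
  intro x hx
  rw [Submodule.restrictScalars_mem] at hx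
  refine Submodule.smul_induction_on hx (fun r hr n hn => ?_) fun _ _ => add_mem
  have hr1 := mem_pathsGE_one_of_mem_radJ bas hmul hmul0 hr
  clear hr
  induction hr1 using Submodule.span_induction with
  | mem r hr =>
    obtain ⟨⟨a, b, p, hp⟩, hpos, rfl⟩ := hr
    obtain ⟨c, τ, α, rfl⟩ :=
      (Path.length_ne_zero_iff_eq_cons p).1 (Nat.one_le_iff_ne_zero.1 hpos)
    have hτ : τ.length ≤ L := Nat.le_of_succ_le hp
    have hcons : bas ⟨a, b, τ.cons α, hp⟩ = arrow bas h1 ⟨c, b, α⟩ * bas ⟨a, c, τ, hτ⟩ := by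
      rw [arrow_mul_bas bas hmul, dif_pos hp]
    rw [hcons, mul_smul]
    exact Submodule.subset_span ⟨c, b, α, _, N.smul_mem _ hn, rfl⟩
  | zero => rw [zero_smul]; exact zero_mem _
  | add r s _ _ hr hs => rw [add_smul]; exact add_mem hr hs
  | smul k r _ hr => rw [smul_assoc]; exact Submodule.smul_mem _ k hr

theorem exists_finsupp_of_mem_arrowSpan (h1 : 1 ≤ L) (N : Submodule Λ M) {x : M}
    (hx : x ∈ arrowSpan bas h1 (N : Set M)) :
    ∃ g : Total V →₀ M, (∀ γ, g γ ∈ N) ∧ (g.sum fun γ u => arrow bas h1 γ • u) = x := by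
  classical
  induction hx using Submodule.span_induction with
  | mem x hx =>
    obtain ⟨a, b, α, u, hu, rfl⟩ := hx
    refine ⟨Finsupp.single ⟨a, b, α⟩ u, fun γ => ?_, Finsupp.sum_single_index (smul_zero _)⟩
    rw [Finsupp.single_apply]
    split_ifs
    exacts [hu, zero_mem _]
  | zero => exact ⟨0, fun _ => zero_mem _, Finsupp.sum_zero_index⟩
  | add x y _ _ hx hy =>
    obtain ⟨g, hgN, rfl⟩ := hx
    obtain ⟨g', hg'N, rfl⟩ := hy
    exact ⟨g + g', fun γ => add_mem (hgN γ) (hg'N γ),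
      Finsupp.sum_add_index' (fun _ => smul_zero _) fun _ => smul_add _⟩
  | smul k x _ hx =>
    obtain ⟨g, hgN, rfl⟩ := hx
    refine ⟨k • g, fun γ => N.smul_of_tower_mem k (hgN γ), ?_⟩
    rw [Finsupp.sum_smul_index' fun _ => smul_zero _, Finsupp.smul_sum]
    exact Finset.sum_congr rfl fun γ _ => smul_comm _ _ _

include hmul hmul0 in
theorem arrowSpan_le_radJ_smul_inf (h1 : 1 ≤ L) (C : Submodule Λ M) (l : ℕ) :
    arrowSpan bas h1 ((C ⊓ radJ bas ^ l • ⊤ : Submodule Λ M) : Set M) ≤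
      (radJ bas • C ⊓ radJ bas ^ (l + 1) • ⊤).restrictScalars K := by
  rw [arrowSpan, Submodule.span_le]
  rintro _ ⟨a, b, α, u, ⟨huC, huJ⟩, rfl⟩
  exact ⟨Submodule.smul_mem_smul (arrow_mem_radJ bas h1 ⟨a, b, α⟩) huC,
    arrow_smul_mem_radJ_pow_succ_smul bas hmul hmul0 h1 ⟨a, b, α⟩ huJ⟩

end TruncatedPathAlgebra

open TruncatedPathAlgebra

/-- Let $Λ = KQ/⟨\text{paths of length } L+1⟩$ be a truncated path algebra, $P$ a finitely
generated projective left $Λ$-module, $C ⊆ P$ a $Λ$-submodule, and $0 ≤ l ≤ L$.  Then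
$JC ∩ J^{l+1}P = Q_1 · (C ∩ J^lP)$. -/
theorem stmt_11 {Vq : Type uV} [Quiver.{uE + 1} Vq] {L : ℕ} (h1 : 1 ≤ L)
    {K Λ : Type*} [Field K] [Ring Λ] [Algebra K Λ]
    (bas : Module.Basis (PathLE Vq L) K Λ)
    (hmul : ∀ (a b c : Vq) (p : Quiver.Path a b) (q : Quiver.Path b c)
        (hp : p.length ≤ L) (hq : q.length ≤ L),
      bas ⟨b, c, q, hq⟩ * bas ⟨a, b, p, hp⟩ =
        if h : p.length + q.length ≤ L then
          bas ⟨a, c, p.comp q, by rwa [Quiver.Path.length_comp]⟩ else 0)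
    (hmul0 : ∀ (a b b' c : Vq) (p : Quiver.Path a b) (q : Quiver.Path b' c)
        (hp : p.length ≤ L) (hq : q.length ≤ L), b ≠ b' →
      bas ⟨b', c, q, hq⟩ * bas ⟨a, b, p, hp⟩ = 0)
    (P : Type*) [AddCommGroup P] [Module K P] [Module Λ P] [IsScalarTower K Λ P]
    (hP : Module.Projective Λ P)
    (C : Submodule Λ P) (l : ℕ) (hl : l ≤ L) :
    ((radJ bas • C ⊓ radJ bas ^ (l + 1) • ⊤ : Submodule Λ P) : Set P) =
      (arrowSpan bas h1
        ((C ⊓ radJ bas ^ l • ⊤ : Submodule Λ P) : Set P) : Set P) := by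
  ext x
  refine ⟨fun ⟨hxC, hxP⟩ => ?_, fun hx => arrowSpan_le_radJ_smul_inf bas hmul hmul0 h1 C l hx⟩
  obtain ⟨g, hgC, rfl⟩ := exists_finsupp_of_mem_arrowSpan bas h1 C
    (radJ_smul_le_arrowSpan bas hmul hmul0 h1 C hxC)
  refine Submodule.sum_mem _ fun γ hγ => ?_
  beta_reduce
  rw [← arrow_mul_vertex bas hmul h1 γ, mul_smul]
  exact Submodule.subset_span ⟨γ.left, γ.right, γ.hom, _, ⟨C.smul_mem _ (hgC γ),
    vertex_smul_mem_of_sum_arrow_smul_mem bas hmul hmul0 h1 hl g.support g hxP hγ⟩, rfl⟩
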